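/- arXiv:1808.01494 — 5 statements merged into one kernel-verified Lean document; each statement's English description precedes it below -/
import Mathlib

section
/- Let g>0, H>0 and Q > 2√(gH³). For every pair (h₁,h₂) ∈ [0,H]×[0,H] with (h₁,h₂) ≠ (0,0) there exists exactly one pair (λ,Q₁) with λ ≥ g·max(h₁,h₂) satisfying Q₁ = h₁√(2λ−2g h₁) and Q−Q₁ = h₂√(2λ−2g h₂); moreover this unique Q₁ lies in [0,Q]. -/
/-- For `g, H > 0` and `Q > 2√(gH³)`, for every pair of asymptotic
heights `(h₁, h₂) ∈ [0,H] × [0,H]` other than `(0,0)`, there is exactly one pair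
`(λ, Q₁)` with `λ ≥ g·max(h₁,h₂)` satisfying `Q₁ = h₁√(2λ−2gh₁)` and
`Q − Q₁ = h₂√(2λ−2gh₂)`; moreover this unique `Q₁` lies in `[0,Q]`. -/
theorem impinging_jet_parameters_determined_by_heights
    (g H Q : ℝ) (hg : 0 < g) (hH : 0 < H)
    (hQ : Q > 2 * Real.sqrt (g * H ^ 3)) :
    ∀ h₁ h₂ : ℝ, h₁ ∈ Set.Icc 0 H → h₂ ∈ Set.Icc 0 H → (h₁, h₂) ≠ (0, 0) →
      (∃! lq : ℝ × ℝ,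
          g * max h₁ h₂ ≤ lq.1 ∧
          lq.2 = h₁ * Real.sqrt (2 * lq.1 - 2 * g * h₁) ∧
          Q - lq.2 = h₂ * Real.sqrt (2 * lq.1 - 2 * g * h₂)) ∧
      (∀ lq : ℝ × ℝ,
          g * max h₁ h₂ ≤ lq.1 →
          lq.2 = h₁ * Real.sqrt (2 * lq.1 - 2 * g * h₁) →
          Q - lq.2 = h₂ * Real.sqrt (2 * lq.1 - 2 * g * h₂) →
          lq.2 ∈ Set.Icc 0 Q) := by
  have hQpos : 0 < Q := lt_of_le_of_lt (by positivity) hQ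
  intro h₁ h₂ hh₁ hh₂ hne
  obtain ⟨h1n, h1H⟩ := hh₁
  obtain ⟨h2n, h2H⟩ := hh₂
  set m := max h₁ h₂ with hm
  have hmH : m ≤ H := max_le h1H h2H
  have h1m : h₁ ≤ m := le_max_left _ _
  have h2m : h₂ ≤ m := le_max_right _ _
  have hmpos : 0 < m := by
    rcases eq_or_lt_of_le h1n with h | h
    · rcases eq_or_lt_of_le h2n with h' | h'
      · exact absurd (by simp [← h, ← h']) hne
      · exact lt_of_lt_of_le h' h2m
    · exact lt_of_lt_of_le h h1m
  have hm0 : m ≠ 0 := ne_of_gt hmpos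
  set f : ℝ → ℝ := fun l =>
    h₁ * Real.sqrt (2 * l - 2 * g * h₁) + h₂ * Real.sqrt (2 * l - 2 * g * h₂) with hf
  have hcont : Continuous f := by fun_prop
  -- strict monotonicity on Ici (g*m)
  have hmono : StrictMonoOn f (Set.Ici (g * m)) := by
    intro a ha b hb hab
    simp only [Set.mem_Ici] at ha hb
    have hga1 : g * h₁ ≤ a := le_trans (by nlinarith) ha
    have hga2 : g * h₂ ≤ a := le_trans (by nlinarith) ha
    have hmle : ∀ h : ℝ, 0 ≤ h →
        h * Real.sqrt (2 * a - 2 * g * h) ≤ h * Real.sqrt (2 * b - 2 * g * h) := by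
      intro h hh
      exact mul_le_mul_of_nonneg_left (Real.sqrt_le_sqrt (by linarith)) hh
    rcases max_cases h₁ h₂ with ⟨hme, _⟩ | ⟨hme, _⟩
    · have h1pos : 0 < h₁ := by rw [← hme]; exact hmpos
      have hs : h₁ * Real.sqrt (2 * a - 2 * g * h₁) < h₁ * Real.sqrt (2 * b - 2 * g * h₁) :=
        mul_lt_mul_of_pos_left
          (Real.sqrt_lt_sqrt (by nlinarith [hga1]) (by linarith)) h1pos
      have h2le := hmle h₂ h2n
      simp only [hf]
      linarith
    · have h2pos : 0 < h₂ := by rw [← hme]; exact hmpos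
      have hs : h₂ * Real.sqrt (2 * a - 2 * g * h₂) < h₂ * Real.sqrt (2 * b - 2 * g * h₂) :=
        mul_lt_mul_of_pos_left
          (Real.sqrt_lt_sqrt (by nlinarith [hga2]) (by linarith)) h2pos
      have h1le := hmle h₁ h1n
      simp only [hf]
      linarith
  -- bound at the left endpoint
  have hHbound : H * Real.sqrt (2 * g * H) < Q := by
    have e1 : H * Real.sqrt (2 * g * H) = Real.sqrt (2 * g * H ^ 3) := by
      rw [show 2 * g * H ^ 3 = H ^ 2 * (2 * g * H) by ring,
        Real.sqrt_mul (show (0:ℝ) ≤ H ^ 2 by positivity) (2 * g * H),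
        Real.sqrt_sq hH.le]
    have hs4 : Real.sqrt 4 = 2 := by
      rw [show (4 : ℝ) = 2 ^ 2 by norm_num]
      exact Real.sqrt_sq (by norm_num)
    have e2 : Real.sqrt (2 * g * H ^ 3) < 2 * Real.sqrt (g * H ^ 3) := by
      have h4 : Real.sqrt (4 * (g * H ^ 3)) = 2 * Real.sqrt (g * H ^ 3) := by
        rw [Real.sqrt_mul (show (0:ℝ) ≤ 4 by norm_num) (g * H ^ 3), hs4]
      rw [← h4]
      exact Real.sqrt_lt_sqrt (by positivity)
        (by nlinarith [mul_pos hg (pow_pos hH 3)])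
    linarith
  have hf0 : f (g * m) < Q := by
    have key : ∀ h : ℝ, 0 ≤ h → h ≤ H →
        h * Real.sqrt (2 * (g * m) - 2 * g * h) ≤ H * Real.sqrt (2 * g * H) := by
      intro h hh hhH
      have hle : Real.sqrt (2 * (g * m) - 2 * g * h) ≤ Real.sqrt (2 * g * H) :=
        Real.sqrt_le_sqrt (by nlinarith)
      exact mul_le_mul hhH hle (Real.sqrt_nonneg _) hH.le
    rcases max_cases h₁ h₂ with ⟨hme, _⟩ | ⟨hme, _⟩
    · have hm1 : m = h₁ := hm.trans hme
      have hz : h₁ * Real.sqrt (2 * (g * m) - 2 * g * h₁) = 0 := by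
        rw [hm1, show 2 * (g * h₁) - 2 * g * h₁ = 0 by ring, Real.sqrt_zero, mul_zero]
      have h2b := key h₂ h2n h2H
      simp only [hf]
      linarith
    · have hm2 : m = h₂ := hm.trans hme
      have hz : h₂ * Real.sqrt (2 * (g * m) - 2 * g * h₂) = 0 := by
        rw [hm2, show 2 * (g * h₂) - 2 * g * h₂ = 0 by ring, Real.sqrt_zero, mul_zero]
      have h1b := key h₁ h1n h1H
      simp only [hf]
      linarith
  -- upper bound point
  set b := g * m + Q ^ 2 / (2 * m ^ 2) with hb
  have hgb : g * m ≤ b := le_add_of_nonneg_right (by positivity)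
  have hfb : Q ≤ f b := by
    have harg : 2 * b - 2 * g * m = (Q / m) ^ 2 := by
      rw [hb]; field_simp; ring
    have hmm : m * Real.sqrt (2 * b - 2 * g * m) = Q := by
      rw [harg, Real.sqrt_sq (by positivity)]
      field_simp
    rcases max_cases h₁ h₂ with ⟨hme, _⟩ | ⟨hme, _⟩
    · have hm1 : m = h₁ := hm.trans hme
      rw [hm1] at hmm
      have h2nn : 0 ≤ h₂ * Real.sqrt (2 * b - 2 * g * h₂) :=
        mul_nonneg h2n (Real.sqrt_nonneg _)
      simp only [hf]
      linarith
    · have hm2 : m = h₂ := hm.trans hme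
      rw [hm2] at hmm
      have h1nn : 0 ≤ h₁ * Real.sqrt (2 * b - 2 * g * h₁) :=
        mul_nonneg h1n (Real.sqrt_nonneg _)
      simp only [hf]
      linarith
  obtain ⟨l, hlmem, hfl⟩ :=
    intermediate_value_Icc hgb hcont.continuousOn ⟨hf0.le, hfb⟩
  have hlge : g * m ≤ l := hlmem.1
  have hfl' : h₁ * Real.sqrt (2 * l - 2 * g * h₁) + h₂ * Real.sqrt (2 * l - 2 * g * h₂) = Q := hfl
  constructor
  · refine ⟨(l, h₁ * Real.sqrt (2 * l - 2 * g * h₁)), ⟨hlge, rfl, show Q - h₁ * Real.sqrt (2 * l - 2 * g * h₁) = h₂ * Real.sqrt (2 * l - 2 * g * h₂) by linarith⟩, ?_⟩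
    rintro ⟨l', q'⟩ ⟨hl', hq1, hq2⟩
    dsimp only at hl' hq1 hq2
    have hfl'2 : f l' = Q := by
      simp only [hf]; linarith
    have hll : l' = l := hmono.injOn (Set.mem_Ici.mpr hl') (Set.mem_Ici.mpr hlge)
      (by rw [hfl'2, hfl])
    exact Prod.ext hll (by rw [hq1, hll])
  · intro lq hge hq1 hq2
    refine ⟨?_, ?_⟩
    · rw [hq1]; exact mul_nonneg h1n (Real.sqrt_nonneg _)
    · have : 0 ≤ h₂ * Real.sqrt (2 * lq.1 - 2 * g * h₂) :=
        mul_nonneg h2n (Real.sqrt_nonneg _)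
      linarith
end

section
/- Let g>0, H>0, Q > 2√(gH³), and let h₁,h₂ ∈ (0,H] with h₁ ≠ h₂. Define Q₁ = ( −Q h₁² + h₁ h₂ √(Q² + 2g(h₂²−h₁²)(h₂−h₁)) ) / (h₂²−h₁²) and λ = Q₁²/(2h₁²) + g h₁. Then 0 ≤ Q₁ ≤ Q, λ ≥ g·max(h₁,h₂), and the pair (λ,Q₁) satisfies Q₁ = h₁√(2λ−2g h₁) and Q−Q₁ = h₂√(2λ−2g h₂). -/
/-!
Write `D = h₂² − h₁²` and `S` for the square root in the formula. Then `Q₁ = h₁ u` and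
`Q − Q₁ = h₂ v` with `u = (h₂ S − Q h₁)/D` and `v = (Q h₂ − h₁ S)/D`; the two speeds are
exchanged by swapping `h₁` and `h₂`. Since `S² − Q² = 2g D (h₂ − h₁)`, one gets
`v² − u² = 2g(h₁ − h₂)`, which is Bernoulli's law `u²/2 + g h₁ = v²/2 + g h₂ = λ` along the two
free streamlines. The sign conditions `u, v ≥ 0` reduce, after squaring, to
`2g h²(h' − h) ≤ Q²` for the two orderings of the heights, and this follows from `Q² > 4gH³`.
-/

open Real

/-- The asymptotic speed `(b S − Q a)/(b² − a²)` of the branch of height `a`, the other branch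
having height `b`. -/
noncomputable def jetSpeed (g Q a b : ℝ) : ℝ :=
  (b * √(Q ^ 2 + 2 * g * (b ^ 2 - a ^ 2) * (b - a)) - Q * a) / (b ^ 2 - a ^ 2)

section JetSpeed

variable {g Q a b : ℝ}

lemma jetSpeed_radicand_comm (g Q a b : ℝ) :
    Q ^ 2 + 2 * g * (a ^ 2 - b ^ 2) * (a - b) = Q ^ 2 + 2 * g * (b ^ 2 - a ^ 2) * (b - a) := by
  ring

lemma jetSpeed_radicand_nonneg (hg : 0 ≤ g) (ha : 0 ≤ a) (hb : 0 ≤ b) :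
    0 ≤ Q ^ 2 + 2 * g * (b ^ 2 - a ^ 2) * (b - a) := by
  have : 0 ≤ 2 * g * (a + b) * (b - a) ^ 2 := by positivity
  nlinarith [sq_nonneg Q]

lemma mul_jetSpeed_add_mul_jetSpeed (hab : a ^ 2 ≠ b ^ 2) :
    a * jetSpeed g Q a b + b * jetSpeed g Q b a = Q := by
  have hD : b ^ 2 - a ^ 2 ≠ 0 := sub_ne_zero.mpr hab.symm
  rw [jetSpeed, jetSpeed, jetSpeed_radicand_comm]
  field_simp
  ring

lemma jetSpeed_sq_sub_jetSpeed_sq (hg : 0 ≤ g) (ha : 0 ≤ a) (hb : 0 ≤ b) (hab : a ≠ b) :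
    jetSpeed g Q b a ^ 2 - jetSpeed g Q a b ^ 2 = 2 * g * (a - b) := by
  have hD : b ^ 2 - a ^ 2 ≠ 0 :=
    sub_ne_zero.mpr fun h => hab ((pow_left_inj₀ hb ha two_ne_zero).mp h).symm
  set S := √(Q ^ 2 + 2 * g * (b ^ 2 - a ^ 2) * (b - a)) with hS_def
  have hS : S ^ 2 = Q ^ 2 + 2 * g * (b ^ 2 - a ^ 2) * (b - a) :=
    sq_sqrt (jetSpeed_radicand_nonneg hg ha hb)
  have hv : jetSpeed g Q b a = (Q * b - a * S) / (b ^ 2 - a ^ 2) := by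
    rw [jetSpeed, jetSpeed_radicand_comm, ← hS_def, ← neg_sub (b ^ 2), div_neg, ← neg_div]
    ring
  rw [hv, jetSpeed, ← hS_def, div_pow, div_pow, ← sub_div, div_eq_iff (pow_ne_zero 2 hD)]
  linear_combination (a ^ 2 - b ^ 2) * hS

lemma jetSpeed_nonneg (hg : 0 ≤ g) (ha : 0 ≤ a) (hb : 0 ≤ b) (hQ : 0 ≤ Q)
    (hab : 2 * g * b ^ 2 * (a - b) ≤ Q ^ 2) : 0 ≤ jetSpeed g Q a b := by
  set S := √(Q ^ 2 + 2 * g * (b ^ 2 - a ^ 2) * (b - a))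
  have hS : S ^ 2 = Q ^ 2 + 2 * g * (b ^ 2 - a ^ 2) * (b - a) :=
    sq_sqrt (jetSpeed_radicand_nonneg hg ha hb)
  have hS0 : 0 ≤ S := sqrt_nonneg _
  rcases lt_trichotomy a b with h | rfl | h
  · have hQS : Q ≤ S := by
      have : 0 ≤ 2 * g * (a + b) * (b - a) ^ 2 := by positivity
      exact le_sqrt_of_sq_le (by nlinarith)
    refine div_nonneg ?_ (by nlinarith)
    nlinarith [mul_le_mul_of_nonneg_left hQS hb]
  · simp [jetSpeed]
  · have hbS : b * S ≤ Q * a := by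
      refine (pow_le_pow_iff_left₀ (by positivity) (by positivity) two_ne_zero).mp ?_
      have : 0 ≤ (a - b) * (a + b) := by nlinarith
      nlinarith [mul_le_mul_of_nonneg_right hab this]
    exact div_nonneg_of_nonpos (by linarith) (by nlinarith)

end JetSpeed

lemma sq_mul_sub_le_cube {a b H : ℝ} (hb : 0 ≤ b) (hbH : b ≤ H) (haH : a ≤ H) :
    b ^ 2 * (a - b) ≤ H ^ 3 := by
  calc b ^ 2 * (a - b) ≤ b ^ 2 * H := by gcongr; linarith
    _ ≤ H ^ 2 * H := by gcongr; linarith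
    _ = H ^ 3 := by ring

lemma jet_branches_of_bernoulli {g Q Q₁ h₁ h₂ u v lam : ℝ} (h₁_pos : 0 < h₁) (h₂_nonneg : 0 ≤ h₂)
    (hu : 0 ≤ u) (hv : 0 ≤ v) (hQ₁ : Q₁ = h₁ * u) (hQ₂ : Q - Q₁ = h₂ * v)
    (hbern : v ^ 2 - u ^ 2 = 2 * g * (h₁ - h₂)) (hlam : lam = Q₁ ^ 2 / (2 * h₁ ^ 2) + g * h₁) :
    0 ≤ Q₁ ∧ Q₁ ≤ Q ∧ g * max h₁ h₂ ≤ lam ∧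
      Q₁ = h₁ * √(2 * lam - 2 * g * h₁) ∧ Q - Q₁ = h₂ * √(2 * lam - 2 * g * h₂) := by
  have hlam_u : 2 * lam - 2 * g * h₁ = u ^ 2 := by
    rw [hlam, hQ₁]
    field_simp
    ring
  have hlam_v : 2 * lam - 2 * g * h₂ = v ^ 2 := by linarith
  refine ⟨hQ₁ ▸ mul_nonneg h₁_pos.le hu, by nlinarith, ?_, ?_, ?_⟩
  · rcases le_total h₁ h₂ with h | h
    · rw [max_eq_right h]; nlinarith
    · rw [max_eq_left h]; nlinarith
  · rw [hlam_u, sqrt_sq hu, hQ₁]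
  · rw [hlam_v, sqrt_sq hv, hQ₂]

theorem impinging_jet_explicit_flux_formula_general
    (g H Q h₁ h₂ Q₁ lam : ℝ) (hg : 0 < g)
    (hQ : Q > 2 * Real.sqrt (g * H ^ 3))
    (hh₁ : h₁ ∈ Set.Ioc 0 H) (hh₂ : h₂ ∈ Set.Ioc 0 H) (hne : h₁ ≠ h₂)
    (hQ₁ : Q₁ = (-(Q * h₁ ^ 2) + h₁ * h₂ *
        Real.sqrt (Q ^ 2 + 2 * g * (h₂ ^ 2 - h₁ ^ 2) * (h₂ - h₁))) / (h₂ ^ 2 - h₁ ^ 2))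
    (hlam : lam = Q₁ ^ 2 / (2 * h₁ ^ 2) + g * h₁) :
    0 ≤ Q₁ ∧ Q₁ ≤ Q ∧ g * max h₁ h₂ ≤ lam ∧
      Q₁ = h₁ * Real.sqrt (2 * lam - 2 * g * h₁) ∧
      Q - Q₁ = h₂ * Real.sqrt (2 * lam - 2 * g * h₂) := by
  obtain ⟨h₁_pos, h₁_le⟩ := hh₁
  obtain ⟨h₂_pos, h₂_le⟩ := hh₂
  have hH : 0 < H := h₁_pos.trans_le h₁_le
  have hQ_pos : 0 < Q := (by positivity : 0 ≤ 2 * √(g * H ^ 3)).trans_lt hQ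
  have hQ_sq : 4 * (g * H ^ 3) < Q ^ 2 := by
    nlinarith [sq_sqrt (by positivity : 0 ≤ g * H ^ 3), sqrt_nonneg (g * H ^ 3)]
  have hfeed {a b : ℝ} (hb : 0 < b) (hbH : b ≤ H) (haH : a ≤ H) :
      2 * g * b ^ 2 * (a - b) ≤ Q ^ 2 := by
    have hgH : 0 ≤ g * H ^ 3 := by positivity
    linarith [mul_le_mul_of_nonneg_left (sq_mul_sub_le_cube hb.le hbH haH) hg.le]
  have hQ₁_eq : Q₁ = h₁ * jetSpeed g Q h₁ h₂ := by
    rw [hQ₁, jetSpeed]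
    ring
  have hsq_ne : h₁ ^ 2 ≠ h₂ ^ 2 :=
    fun h => hne <| (pow_left_inj₀ h₁_pos.le h₂_pos.le two_ne_zero).mp h
  refine jet_branches_of_bernoulli h₁_pos h₂_pos.le
    (jetSpeed_nonneg hg.le h₁_pos.le h₂_pos.le hQ_pos.le (hfeed h₂_pos h₂_le h₁_le))
    (jetSpeed_nonneg hg.le h₂_pos.le h₁_pos.le hQ_pos.le (hfeed h₁_pos h₁_le h₂_le))
    hQ₁_eq ?_ (jetSpeed_sq_sub_jetSpeed_sq hg.le h₁_pos.le h₂_pos.le hne) hlam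
  rw [hQ₁_eq]
  linear_combination (mul_jetSpeed_add_mul_jetSpeed (g := g) (Q := Q) hsq_ne).symm

/-- For `g, H > 0`, `Q > 2√(gH³)` and distinct heights
`h₁, h₂ ∈ (0,H]`, the explicit value
`Q₁ = (−Q h₁² + h₁h₂ √(Q² + 2g(h₂²−h₁²)(h₂−h₁))) / (h₂²−h₁²)` together with
`λ = Q₁²/(2h₁²) + g h₁` satisfies `0 ≤ Q₁ ≤ Q`, `λ ≥ g·max(h₁,h₂)`,
`Q₁ = h₁√(2λ−2gh₁)` and `Q − Q₁ = h₂√(2λ−2gh₂)`. -/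
theorem impinging_jet_explicit_flux_formula
    (g H Q h₁ h₂ Q₁ lam : ℝ) (hg : 0 < g) (hH : 0 < H)
    (hQ : Q > 2 * Real.sqrt (g * H ^ 3))
    (hh₁ : h₁ ∈ Set.Ioc 0 H) (hh₂ : h₂ ∈ Set.Ioc 0 H) (hne : h₁ ≠ h₂)
    (hQ₁ : Q₁ = (-(Q * h₁ ^ 2) + h₁ * h₂ *
        Real.sqrt (Q ^ 2 + 2 * g * (h₂ ^ 2 - h₁ ^ 2) * (h₂ - h₁))) / (h₂ ^ 2 - h₁ ^ 2))
    (hlam : lam = Q₁ ^ 2 / (2 * h₁ ^ 2) + g * h₁) :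
    0 ≤ Q₁ ∧ Q₁ ≤ Q ∧ g * max h₁ h₂ ≤ lam ∧
      Q₁ = h₁ * Real.sqrt (2 * lam - 2 * g * h₁) ∧
      Q - Q₁ = h₂ * Real.sqrt (2 * lam - 2 * g * h₂) :=
  impinging_jet_explicit_flux_formula_general g H Q h₁ h₂ Q₁ lam hg hQ hh₁ hh₂ hne hQ₁ hlam
end

section
/- Let g>0, H>0, Q > 2√(gH³). For every Q₁ ∈ (0,Q) and every λ ≥ max{Q₁², (Q−Q₁)²}/(2H²) + gH, there exists a unique pair (h₁,h₂) ∈ (0,H]×(0,H] such that λ = Q₁²/(2h₁²) + g h₁ and λ = (Q−Q₁)²/(2h₂²) + g h₂. -/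
private lemma jet_key (g H q lam : ℝ) (hg : 0 < g) (hH : 0 < H) (hq : 0 < q)
    (h1 : q ^ 2 / (2 * H ^ 2) + g * H ≤ lam) (h2 : 3 / 2 * g * H < lam) :
    ∃! h : ℝ, h ∈ Set.Ioc 0 H ∧ lam = q ^ 2 / (2 * h ^ 2) + g * h := by
  have hlam0 : 0 < lam := lt_trans (by positivity) h2
  -- existence via IVT on [ε, H]
  set ε : ℝ := min H (q / Real.sqrt (2 * lam)) with hε
  have hs : 0 < Real.sqrt (2 * lam) := Real.sqrt_pos.2 (by linarith)
  have hε0 : 0 < ε := lt_min hH (by positivity)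
  have hεH : ε ≤ H := min_le_left _ _
  set f : ℝ → ℝ := fun h => q ^ 2 / (2 * h ^ 2) + g * h with hf
  have hcont : ContinuousOn f (Set.Icc ε H) := by
    apply ContinuousOn.add
    · apply ContinuousOn.div continuousOn_const (by fun_prop)
      intro x hx
      have : 0 < x := lt_of_lt_of_le hε0 hx.1
      positivity
    · fun_prop
  have hfε : lam ≤ f ε := by
    have hεle : ε ≤ q / Real.sqrt (2 * lam) := min_le_right _ _
    have h2' : ε * Real.sqrt (2 * lam) ≤ q := by
      rw [← le_div_iff₀ hs]; exact hεle
    have hsqs : (ε * Real.sqrt (2 * lam)) ^ 2 = ε ^ 2 * (2 * lam) := by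
      rw [mul_pow, Real.sq_sqrt (by linarith : (0:ℝ) ≤ 2 * lam)]
    have hsq : ε ^ 2 * (2 * lam) ≤ q ^ 2 := by
      nlinarith [mul_le_mul h2' h2' (by positivity : (0:ℝ) ≤ ε * Real.sqrt (2 * lam)) hq.le]
    have : lam ≤ q ^ 2 / (2 * ε ^ 2) := by
      rw [le_div_iff₀ (by positivity : (0:ℝ) < 2 * ε ^ 2)]; nlinarith
    have hge : 0 ≤ g * ε := by positivity
    simp only [hf]; linarith
  have hfH : f H ≤ lam := by simpa [hf] using h1
  obtain ⟨c, hc, hfc⟩ := intermediate_value_Icc' hεH hcont ⟨hfH, hfε⟩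
  have hc0 : 0 < c := lt_of_lt_of_le hε0 hc.1
  -- uniqueness
  have uniq : ∀ a b : ℝ, a ∈ Set.Ioc 0 H → b ∈ Set.Ioc 0 H →
      lam = q ^ 2 / (2 * a ^ 2) + g * a → lam = q ^ 2 / (2 * b ^ 2) + g * b → a = b := by
    intro a b ha hb hfa hfb
    by_contra hne
    have ha0 := ha.1; have haH := ha.2; have hb0 := hb.1; have hbH := hb.2
    have ea : lam * (2 * a ^ 2) = q ^ 2 + 2 * g * a ^ 3 := by
      rw [hfa]; field_simp
    have eb : lam * (2 * b ^ 2) = q ^ 2 + 2 * g * b ^ 3 := by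
      rw [hfb]; field_simp
    have hab : a - b ≠ 0 := sub_ne_zero.2 hne
    have key : lam * (a + b) = g * (a ^ 2 + a * b + b ^ 2) := by
      have h' : (a - b) * (lam * (a + b) - g * (a ^ 2 + a * b + b ^ 2)) = 0 := by
        linear_combination (1/2) * ea - (1/2) * eb
      rcases mul_eq_zero.1 h' with h | h
      · exact absurd h hab
      · linarith
    nlinarith [key,
      mul_pos (add_pos ha0 hb0) (by linarith : (0:ℝ) < lam - 3 / 2 * g * H),
      mul_nonneg hg.le (mul_nonneg (sub_nonneg.2 haH) ha0.le),
      mul_nonneg hg.le (mul_nonneg (sub_nonneg.2 hbH) hb0.le),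
      mul_nonneg hg.le (sq_nonneg (a - b))]
  exact ⟨c, ⟨⟨hc0, hc.2⟩, hfc.symm⟩, fun y hy => uniq y c hy.1 ⟨hc0, hc.2⟩ hy.2 hfc.symm⟩

/-- For `g, H > 0`, `Q > 2√(gH³)`, every flux `Q₁ ∈ (0,Q)` and every
Bernoulli constant `λ ≥ max{Q₁²,(Q−Q₁)²}/(2H²) + gH`, there is a unique pair of
asymptotic heights `(h₁,h₂) ∈ (0,H] × (0,H]` with `λ = Q₁²/(2h₁²) + gh₁` and
`λ = (Q−Q₁)²/(2h₂²) + gh₂`. -/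
theorem impinging_jet_heights_determined_by_parameters
    (g H Q Q₁ lam : ℝ) (hg : 0 < g) (hH : 0 < H)
    (hQ : Q > 2 * Real.sqrt (g * H ^ 3))
    (hQ₁ : Q₁ ∈ Set.Ioo 0 Q)
    (hlam : max (Q₁ ^ 2) ((Q - Q₁) ^ 2) / (2 * H ^ 2) + g * H ≤ lam) :
    ∃! hh : ℝ × ℝ,
      hh.1 ∈ Set.Ioc 0 H ∧ hh.2 ∈ Set.Ioc 0 H ∧
      lam = Q₁ ^ 2 / (2 * hh.1 ^ 2) + g * hh.1 ∧
      lam = (Q - Q₁) ^ 2 / (2 * hh.2 ^ 2) + g * hh.2 := by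
  obtain ⟨hQ₁0, hQ₁Q⟩ := hQ₁
  have hq2 : 0 < Q - Q₁ := by linarith
  have hsq : Real.sqrt (g * H ^ 3) ^ 2 = g * H ^ 3 := Real.sq_sqrt (by positivity)
  have hs0 : 0 ≤ Real.sqrt (g * H ^ 3) := Real.sqrt_nonneg _
  have hQsq : 4 * (g * H ^ 3) < Q ^ 2 := by nlinarith
  have hM : Q ^ 2 / 4 ≤ max (Q₁ ^ 2) ((Q - Q₁) ^ 2) := by
    rcases le_total Q₁ (Q - Q₁) with h | h
    · refine le_trans ?_ (le_max_right _ _); nlinarith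
    · refine le_trans ?_ (le_max_left _ _); nlinarith
  have hMgH : g * H ^ 3 < max (Q₁ ^ 2) ((Q - Q₁) ^ 2) := by nlinarith
  have hlam32 : 3 / 2 * g * H < lam := by
    have : g * H / 2 < max (Q₁ ^ 2) ((Q - Q₁) ^ 2) / (2 * H ^ 2) := by
      rw [div_lt_div_iff₀ (by norm_num) (by positivity)]; nlinarith
    linarith
  have hl1 : Q₁ ^ 2 / (2 * H ^ 2) + g * H ≤ lam := by
    have h' : Q₁ ^ 2 / (2 * H ^ 2) ≤ max (Q₁ ^ 2) ((Q - Q₁) ^ 2) / (2 * H ^ 2) := by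
      gcongr; exact le_max_left _ _
    linarith
  have hl2 : (Q - Q₁) ^ 2 / (2 * H ^ 2) + g * H ≤ lam := by
    have h' : (Q - Q₁) ^ 2 / (2 * H ^ 2) ≤ max (Q₁ ^ 2) ((Q - Q₁) ^ 2) / (2 * H ^ 2) := by
      gcongr; exact le_max_right _ _
    linarith
  obtain ⟨h₁, ⟨hm1, he1⟩, hu1⟩ := jet_key g H Q₁ lam hg hH hQ₁0 hl1 hlam32
  obtain ⟨h₂, ⟨hm2, he2⟩, hu2⟩ := jet_key g H (Q - Q₁) lam hg hH hq2 hl2 hlam32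
  refine ⟨(h₁, h₂), ⟨hm1, hm2, he1, he2⟩, ?_⟩
  rintro ⟨y₁, y₂⟩ ⟨hy1, hy2, hey1, hey2⟩
  exact Prod.ext (hu1 y₁ ⟨hy1, hey1⟩) (hu2 y₂ ⟨hy2, hey2⟩)
end

section
/- Let g>0, H>0, Q > 2√(gH³) and fix λ. Suppose Q₁, Q₁' ∈ (0,Q) with Q₁ < Q₁' and λ ≥ max{Q₁², (Q−Q₁)², Q₁'², (Q−Q₁')²}/(2H²) + gH. If h₁, h₂, h₁', h₂' ∈ (0,H] satisfy λ = Q₁²/(2h₁²)+g h₁ = (Q−Q₁)²/(2h₂²)+g h₂ and λ = Q₁'²/(2h₁'²)+g h₁' = (Q−Q₁')²/(2h₂'²)+g h₂', then h₁ < h₁' and h₂ > h₂'; that is, for fixed λ the asymptotic height h₁ is strictly increasing in the flux Q₁ and h₂ is strictly decreasing in Q₁. -/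
set_option maxHeartbeats 800000 in
private lemma impinging_key (g H lam q q' a b : ℝ) (hg : 0 < g) (hH : 0 < H)
    (hq : 0 < q) (hqq : q < q')
    (ha0 : 0 < a) (haH : a ≤ H) (hb0 : 0 < b) (hbH : b ≤ H)
    (hstrict : q ^ 2 / (2 * H ^ 2) + g * H < lam)
    (hea : lam = q ^ 2 / (2 * a ^ 2) + g * a)
    (heb : lam = q' ^ 2 / (2 * b ^ 2) + g * b) : a < b := by
  have hq2 : q ^ 2 < q' ^ 2 := by nlinarith
  -- clear denominators
  have e1 : 2 * lam * a ^ 2 = q ^ 2 + 2 * g * a ^ 3 := by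
    rw [hea]; field_simp
  have e2 : 2 * lam * b ^ 2 = q' ^ 2 + 2 * g * b ^ 3 := by
    rw [heb]; field_simp
  have strict' : q ^ 2 + 2 * g * H ^ 3 < 2 * lam * H ^ 2 := by
    have h2H : (0 : ℝ) < 2 * H ^ 2 := by positivity
    have h := mul_lt_mul_of_pos_right hstrict h2H
    have hrw : (q ^ 2 / (2 * H ^ 2) + g * H) * (2 * H ^ 2)
        = q ^ 2 + 2 * g * H ^ 3 := by field_simp
    rw [hrw] at h; linarith
  -- a < H
  have haH' : a < H := by
    rcases lt_or_eq_of_le haH with h | h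
    · exact h
    · exfalso; rw [h] at e1; linarith
  -- B : q^2 * (H + a) > 2*g*a^2*H^2
  have e1H : 2 * lam * a ^ 2 * H ^ 2 = (q ^ 2 + 2 * g * a ^ 3) * H ^ 2 := by rw [e1]
  have c1 : (q ^ 2 + 2 * g * H ^ 3) * a ^ 2 < (q ^ 2 + 2 * g * a ^ 3) * H ^ 2 := by
    have h := mul_lt_mul_of_pos_right strict' (pow_pos ha0 2)
    nlinarith [h, e1H]
  have B : 2 * g * a ^ 2 * H ^ 2 < q ^ 2 * (H + a) := by
    have hHa : 0 < H - a := sub_pos.2 haH'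
    have h : 2 * g * a ^ 2 * H ^ 2 * (H - a) < q ^ 2 * (H + a) * (H - a) := by
      nlinarith [c1]
    exact lt_of_mul_lt_mul_right h hHa.le
  by_contra hab
  push_neg at hab
  rcases lt_or_eq_of_le hab with hba | hba
  · -- b < a ; derive C : q^2*(a+b) < 2*g*a^2*b^2
    have D : q ^ 2 + 2 * g * b ^ 3 < 2 * lam * b ^ 2 := by linarith [e2]
    have e1b : 2 * lam * a ^ 2 * b ^ 2 = (q ^ 2 + 2 * g * a ^ 3) * b ^ 2 := by rw [e1]
    have c2 : (q ^ 2 + 2 * g * b ^ 3) * a ^ 2 < (q ^ 2 + 2 * g * a ^ 3) * b ^ 2 := by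
      have h := mul_lt_mul_of_pos_right D (pow_pos ha0 2)
      nlinarith [h, e1b]
    have C : q ^ 2 * (a + b) < 2 * g * a ^ 2 * b ^ 2 := by
      have hab' : 0 < a - b := sub_pos.2 hba
      have h : q ^ 2 * (a + b) * (a - b) < 2 * g * a ^ 2 * b ^ 2 * (a - b) := by
        nlinarith [c2]
      exact lt_of_mul_lt_mul_right h hab'.le
    -- contradiction
    have hB' := mul_lt_mul_of_pos_right B (by positivity : (0:ℝ) < a + b)
    have hC' := mul_lt_mul_of_pos_right C (by positivity : (0:ℝ) < H + a)
    have key1 : 2 * g * a ^ 2 * (H ^ 2 * (a + b)) < 2 * g * a ^ 2 * (b ^ 2 * (H + a)) := by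
      nlinarith [hB', hC']
    have key2 : H ^ 2 * (a + b) < b ^ 2 * (H + a) :=
      lt_of_mul_lt_mul_left key1 (by positivity)
    nlinarith [key2, mul_nonneg (mul_nonneg (sub_nonneg.2 hbH) hb0.le) hH.le,
      mul_nonneg (mul_nonneg (sub_nonneg.2 hbH) (by linarith : (0:ℝ) ≤ H + b)) ha0.le]
  · -- b = a : q^2 = q'^2, contradiction
    rw [hba] at e2; linarith [e1, e2, hq2]

/-- For fixed Bernoulli constant `λ`, the asymptotic height `h₁` is
strictly increasing and `h₂` strictly decreasing in the effluent flux `Q₁`: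
if `Q₁ < Q₁'` in `(0,Q)`, `λ` is admissible for both, and `(h₁,h₂)`, `(h₁',h₂')` are
the corresponding heights in `(0,H]`, then `h₁ < h₁'` and `h₂ > h₂'`. -/
theorem impinging_jet_heights_monotone_in_flux
    (g H Q lam Q₁ Q₁' h₁ h₂ h₁' h₂' : ℝ) (hg : 0 < g) (hH : 0 < H)
    (hQ : Q > 2 * Real.sqrt (g * H ^ 3))
    (hQ₁ : Q₁ ∈ Set.Ioo 0 Q) (hQ₁' : Q₁' ∈ Set.Ioo 0 Q) (hlt : Q₁ < Q₁')
    (hlam : max (max (Q₁ ^ 2) ((Q - Q₁) ^ 2)) (max (Q₁' ^ 2) ((Q - Q₁') ^ 2))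
        / (2 * H ^ 2) + g * H ≤ lam)
    (hh₁ : h₁ ∈ Set.Ioc 0 H) (hh₂ : h₂ ∈ Set.Ioc 0 H)
    (hh₁' : h₁' ∈ Set.Ioc 0 H) (hh₂' : h₂' ∈ Set.Ioc 0 H)
    (he₁ : lam = Q₁ ^ 2 / (2 * h₁ ^ 2) + g * h₁)
    (he₂ : lam = (Q - Q₁) ^ 2 / (2 * h₂ ^ 2) + g * h₂)
    (he₁' : lam = Q₁' ^ 2 / (2 * h₁' ^ 2) + g * h₁')
    (he₂' : lam = (Q - Q₁') ^ 2 / (2 * h₂' ^ 2) + g * h₂') :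
    h₁ < h₁' ∧ h₂ > h₂' := by
  obtain ⟨hQ₁0, hQ₁Q⟩ := hQ₁
  obtain ⟨hQ₁'0, hQ₁'Q⟩ := hQ₁'
  have h2H : (0 : ℝ) < 2 * H ^ 2 := by positivity
  have hM : Q₁' ^ 2 ≤ max (max (Q₁ ^ 2) ((Q - Q₁) ^ 2)) (max (Q₁' ^ 2) ((Q - Q₁') ^ 2)) :=
    le_max_of_le_right (le_max_left _ _)
  have hM2 : (Q - Q₁) ^ 2 ≤ max (max (Q₁ ^ 2) ((Q - Q₁) ^ 2)) (max (Q₁' ^ 2) ((Q - Q₁') ^ 2)) :=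
    le_max_of_le_left (le_max_right _ _)
  have hs1 : Q₁ ^ 2 / (2 * H ^ 2) + g * H < lam := by
    have h1 : Q₁ ^ 2 < Q₁' ^ 2 := by nlinarith
    have h2 := (div_lt_div_iff_of_pos_right h2H).2 (lt_of_lt_of_le h1 hM)
    linarith
  have hs2 : (Q - Q₁') ^ 2 / (2 * H ^ 2) + g * H < lam := by
    have h1 : (Q - Q₁') ^ 2 < (Q - Q₁) ^ 2 := by nlinarith
    have h2 := (div_lt_div_iff_of_pos_right h2H).2 (lt_of_lt_of_le h1 hM2)
    linarith
  exact ⟨impinging_key g H lam Q₁ Q₁' h₁ h₁' hg hH hQ₁0 hlt hh₁.1 hh₁.2 hh₁'.1 hh₁'.2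
      hs1 he₁ he₁',
    impinging_key g H lam (Q - Q₁') (Q - Q₁) h₂' h₂ hg hH (by linarith) (by linarith)
      hh₂'.1 hh₂'.2 hh₂.1 hh₂.2 hs2 he₂' he₂⟩
end

section
/- Let H₁ < H₂ and Q ∈ ℝ. Suppose ψ : ℝ × [H₁,H₂] → ℝ is continuous, twice continuously differentiable and harmonic (ψ_xx + ψ_yy = 0) in the open strip ℝ × (H₁,H₂), satisfies ψ(x,H₁) = 0 and ψ(x,H₂) = Q for all x ∈ ℝ, and 0 ≤ ψ ≤ Q on the strip. Then ψ(x,y) = Q·(y−H₁)/(H₂−H₁) for all (x,y) ∈ ℝ × [H₁,H₂]. -/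
/-!
Subtracting the linear profile, it suffices to show that a bounded harmonic `φ` on the strip
`a ≤ y ≤ b` vanishing on both edges is `≤ 0` (then apply this to `±φ`). With `d = b - a`, the
barrier `w = ε cosh (x / 2d) cos ((y - (a + b) / 2) / d)` lies between `ε cosh (x / 2d) / 2` and
`ε cosh (x / 2d)` on the closed strip and satisfies `Δw = -(3 / 4d²) w < 0`. So `φ - w` is strictly
subharmonic and cannot have an interior maximum, where both pure second derivatives are `≤ 0`. On a
rectangle `[-R, R] × [a, b]` long enough for `w` to dominate the bound on `φ` at `x = ±R`, it is
`≤ 0` on the boundary, hence inside. Thus `φ ≤ ε cosh (x / 2d)`, and `ε → 0` gives `φ ≤ 0`.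
-/

open Set Filter

noncomputable def pdx (f : ℝ × ℝ → ℝ) (p : ℝ × ℝ) : ℝ := fderiv ℝ f p (1, 0)

noncomputable def pdy (f : ℝ × ℝ → ℝ) (p : ℝ × ℝ) : ℝ := fderiv ℝ f p (0, 1)

noncomputable def lap (f : ℝ × ℝ → ℝ) (p : ℝ × ℝ) : ℝ :=
  fderiv ℝ (fun q => pdx f q) p (1, 0) + fderiv ℝ (fun q => pdy f q) p (0, 1)
open Topology Real

theorem IsLocalMax.deriv_deriv_nonpos {g : ℝ → ℝ} {a : ℝ} (hmax : IsLocalMax g a)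
    (hg : ContinuousAt g a) : deriv (deriv g) a ≤ 0 := by
  by_contra! hpos
  have hmin : IsLocalMin g a := isLocalMin_of_deriv_deriv_pos hpos hmax.deriv_eq_zero hg
  have hconst : g =ᶠ[𝓝 a] fun _ => g a :=
    (hmax.and hmin).mono fun t ht => le_antisymm ht.1 ht.2
  have : deriv (deriv g) a = 0 := by
    rw [hconst.deriv.deriv_eq]
    simp
  exact hpos.ne' this

theorem ContDiffAt.differentiableAt_fderiv_apply {E F : Type*} [NormedAddCommGroup E]
    [NormedSpace ℝ E] [NormedAddCommGroup F] [NormedSpace ℝ F] {f : E → F} {p : E}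
    (hf : ContDiffAt ℝ 2 f p) (v : E) : DifferentiableAt ℝ (fun q => fderiv ℝ f q v) p :=
  ((hf.fderiv_right (m := 1) le_rfl).differentiableAt one_ne_zero).clm_apply
    (differentiableAt_const v)

section Partials

variable {f g : ℝ × ℝ → ℝ} {x y : ℝ}

theorem lap_eq_pdx_pdx_add_pdy_pdy (p : ℝ × ℝ) : lap f p = pdx (pdx f) p + pdy (pdy f) p := rfl

theorem hasDerivAt_pdx (hf : DifferentiableAt ℝ f (x, y)) :
    HasDerivAt (fun t => f (t, y)) (pdx f (x, y)) x :=
  hf.hasFDerivAt.comp_hasDerivAt x ((hasDerivAt_id x).prodMk (hasDerivAt_const x y))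

theorem hasDerivAt_pdy (hf : DifferentiableAt ℝ f (x, y)) :
    HasDerivAt (fun t => f (x, t)) (pdy f (x, y)) y :=
  hf.hasFDerivAt.comp_hasDerivAt y ((hasDerivAt_const y x).prodMk (hasDerivAt_id y))

theorem pdx_pdx_eq_deriv_deriv (hf : ContDiffAt ℝ 2 f (x, y)) :
    pdx (pdx f) (x, y) = deriv (deriv fun t => f (t, y)) x := by
  have hslice : Tendsto (fun t => (t, y)) (𝓝 x) (𝓝 (x, y)) :=
    (continuous_id.prodMk continuous_const).continuousAt
  have hderiv : deriv (fun t => f (t, y)) =ᶠ[𝓝 x] fun t => pdx f (t, y) :=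
    (hslice.eventually (hf.eventually (by simp))).mono fun t ht =>
      (hasDerivAt_pdx (ht.differentiableAt two_ne_zero)).deriv
  rw [hderiv.deriv_eq]
  exact (hasDerivAt_pdx (hf.differentiableAt_fderiv_apply _)).deriv.symm

theorem pdy_pdy_eq_deriv_deriv (hf : ContDiffAt ℝ 2 f (x, y)) :
    pdy (pdy f) (x, y) = deriv (deriv fun t => f (x, t)) y := by
  have hslice : Tendsto (fun t => (x, t)) (𝓝 y) (𝓝 (x, y)) :=
    (continuous_const.prodMk continuous_id).continuousAt
  have hderiv : deriv (fun t => f (x, t)) =ᶠ[𝓝 y] fun t => pdy f (x, t) :=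
    (hslice.eventually (hf.eventually (by simp))).mono fun t ht =>
      (hasDerivAt_pdy (ht.differentiableAt two_ne_zero)).deriv
  rw [hderiv.deriv_eq]
  exact (hasDerivAt_pdy (hf.differentiableAt_fderiv_apply _)).deriv.symm

theorem IsLocalMax.lap_nonpos {p : ℝ × ℝ} (hmax : IsLocalMax f p) (hf : ContDiffAt ℝ 2 f p) :
    lap f p ≤ 0 := by
  obtain ⟨x, y⟩ := p
  have hx : Continuous fun t : ℝ => ((t, y) : ℝ × ℝ) := continuous_id.prodMk continuous_const
  have hy : Continuous fun t : ℝ => ((x, t) : ℝ × ℝ) := continuous_const.prodMk continuous_id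
  have hmx : IsLocalMax (fun t => f (t, y)) x := hmax.comp_continuous (b := x) hx.continuousAt
  have hmy : IsLocalMax (fun t => f (x, t)) y := hmax.comp_continuous (b := y) hy.continuousAt
  rw [lap_eq_pdx_pdx_add_pdy_pdy, pdx_pdx_eq_deriv_deriv hf, pdy_pdy_eq_deriv_deriv hf]
  exact add_nonpos (hmx.deriv_deriv_nonpos (hf.continuousAt.comp (x := x) hx.continuousAt))
    (hmy.deriv_deriv_nonpos (hf.continuousAt.comp (x := y) hy.continuousAt))

theorem lap_sub {p : ℝ × ℝ} (hf : ContDiffAt ℝ 2 f p) (hg : ContDiffAt ℝ 2 g p) :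
    lap (fun q => f q - g q) p = lap f p - lap g p := by
  have hd : ∀ᶠ q in 𝓝 p, DifferentiableAt ℝ f q ∧ DifferentiableAt ℝ g q :=
    ((hf.eventually (by simp)).and (hg.eventually (by simp))).mono fun q hq =>
      ⟨hq.1.differentiableAt two_ne_zero, hq.2.differentiableAt two_ne_zero⟩
  have hx : (fun q => pdx (fun q => f q - g q) q) =ᶠ[𝓝 p] fun q => pdx f q - pdx g q :=
    hd.mono fun q hq => by simp only [pdx, fderiv_fun_sub hq.1 hq.2]; rfl
  have hy : (fun q => pdy (fun q => f q - g q) q) =ᶠ[𝓝 p] fun q => pdy f q - pdy g q :=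
    hd.mono fun q hq => by simp only [pdy, fderiv_fun_sub hq.1 hq.2]; rfl
  have hfx : DifferentiableAt ℝ (fun q => pdx f q) p := hf.differentiableAt_fderiv_apply _
  have hfy : DifferentiableAt ℝ (fun q => pdy f q) p := hf.differentiableAt_fderiv_apply _
  have hgx : DifferentiableAt ℝ (fun q => pdx g q) p := hg.differentiableAt_fderiv_apply _
  have hgy : DifferentiableAt ℝ (fun q => pdy g q) p := hg.differentiableAt_fderiv_apply _
  rw [lap, lap, lap, hx.fderiv_eq, hy.fderiv_eq, fderiv_fun_sub hfx hgx, fderiv_fun_sub hfy hgy]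
  simp only [sub_apply]
  ring

end Partials

section Separable

variable {g h g' h' g'' h'' : ℝ → ℝ}

theorem pdx_comp_fst_mul_comp_snd (hg : ∀ t, HasDerivAt g (g' t) t) (hh : Differentiable ℝ h)
    (x y : ℝ) : pdx (fun q => g q.1 * h q.2) (x, y) = g' x * h y := by
  have hg' : Differentiable ℝ g := fun t => (hg t).differentiableAt
  have hd : DifferentiableAt ℝ (fun q : ℝ × ℝ => g q.1 * h q.2) (x, y) := by fun_prop
  exact (hasDerivAt_pdx hd).unique ((hg x).mul_const (h y))

theorem pdy_comp_fst_mul_comp_snd (hg : Differentiable ℝ g) (hh : ∀ t, HasDerivAt h (h' t) t)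
    (x y : ℝ) : pdy (fun q => g q.1 * h q.2) (x, y) = g x * h' y := by
  have hh' : Differentiable ℝ h := fun t => (hh t).differentiableAt
  have hd : DifferentiableAt ℝ (fun q : ℝ × ℝ => g q.1 * h q.2) (x, y) := by fun_prop
  exact (hasDerivAt_pdy hd).unique ((hh y).const_mul (g x))

theorem lap_comp_fst_mul_comp_snd (hg : ∀ t, HasDerivAt g (g' t) t)
    (hg' : ∀ t, HasDerivAt g' (g'' t) t) (hh : ∀ t, HasDerivAt h (h' t) t)
    (hh' : ∀ t, HasDerivAt h' (h'' t) t) (p : ℝ × ℝ) :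
    lap (fun q => g q.1 * h q.2) p = g'' p.1 * h p.2 + g p.1 * h'' p.2 := by
  have hgd : Differentiable ℝ g := fun t => (hg t).differentiableAt
  have hhd : Differentiable ℝ h := fun t => (hh t).differentiableAt
  have hx : pdx (fun q => g q.1 * h q.2) = fun q => g' q.1 * h q.2 :=
    funext fun q => pdx_comp_fst_mul_comp_snd hg hhd q.1 q.2
  have hy : pdy (fun q => g q.1 * h q.2) = fun q => g q.1 * h' q.2 :=
    funext fun q => pdy_comp_fst_mul_comp_snd hgd hh q.1 q.2
  rw [lap_eq_pdx_pdx_add_pdy_pdy, hx, hy, pdx_comp_fst_mul_comp_snd hg' hhd,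
    pdy_comp_fst_mul_comp_snd hgd hh']

theorem lap_comp_snd (hh : ∀ t, HasDerivAt h (h' t) t) (hh' : ∀ t, HasDerivAt h' (h'' t) t)
    (p : ℝ × ℝ) : lap (fun q => h q.2) p = h'' p.2 := by
  simpa using lap_comp_fst_mul_comp_snd (fun t => hasDerivAt_const t (1 : ℝ))
    (fun t => hasDerivAt_const t (0 : ℝ)) hh hh' p

end Separable

theorem lap_cosh_mul_cos (c k l m : ℝ) (p : ℝ × ℝ) :
    lap (fun q => c * cosh (k * q.1) * cos (l * (q.2 - m))) p =
      (k ^ 2 - l ^ 2) * (c * cosh (k * p.1) * cos (l * (p.2 - m))) := by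
  have hin : ∀ t, HasDerivAt (fun t => k * t) k t := fun t => by
    simpa using (hasDerivAt_id t).const_mul k
  have hin' : ∀ t, HasDerivAt (fun t => l * (t - m)) l t := fun t => by
    simpa using ((hasDerivAt_id t).sub_const m).const_mul l
  rw [lap_comp_fst_mul_comp_snd (g := fun t => c * cosh (k * t)) (h := fun t => cos (l * (t - m)))
    (fun t => ((hasDerivAt_cosh _).comp t (hin t)).const_mul c)
    (fun t => (((hasDerivAt_sinh _).comp t (hin t)).mul_const k).const_mul c)
    (fun t => (hasDerivAt_cos _).comp t (hin' t))
    (fun t => (((hasDerivAt_sin _).comp t (hin' t)).neg.mul_const l))]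
  ring

theorem IsCompact.le_of_le_off_interior_of_lap_pos {f : ℝ × ℝ → ℝ} {K : Set (ℝ × ℝ)} {M : ℝ}
    (hK : IsCompact K) (hcont : ContinuousOn f K) (hf : ∀ p ∈ interior K, ContDiffAt ℝ 2 f p)
    (hlap : ∀ p ∈ interior K, 0 < lap f p) (hM : ∀ p ∈ K \ interior K, f p ≤ M) :
    ∀ p ∈ K, f p ≤ M := by
  intro p hp
  obtain ⟨p₀, hp₀, hmax⟩ := hK.exists_isMaxOn ⟨p, hp⟩ hcont
  have hp₀' : p₀ ∉ interior K := fun hint =>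
    (hlap p₀ hint).not_ge ((hmax.isLocalMax (mem_interior_iff_mem_nhds.1 hint)).lap_nonpos
      (hf p₀ hint))
  exact (hmax hp).trans (hM p₀ ⟨hp₀, hp₀'⟩)

theorem Real.tendsto_cosh_atTop : Tendsto cosh atTop atTop :=
  tendsto_atTop_mono (fun x => by rw [cosh_eq]; linarith [exp_pos (-x)])
    (tendsto_exp_atTop.atTop_div_const two_pos)

theorem half_le_cos_inv_mul_sub_midpoint {a b y : ℝ} (hab : a < b) (hy : y ∈ Icc a b) :
    1 / 2 ≤ cos ((b - a)⁻¹ * (y - (a + b) / 2)) := by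
  set x := (b - a)⁻¹ * (y - (a + b) / 2)
  have hx : |x| ≤ 1 / 2 := by
    rw [abs_mul, abs_inv, abs_of_pos (sub_pos.2 hab), inv_mul_le_iff₀ (sub_pos.2 hab), abs_le]
    constructor <;> linarith [hy.1, hy.2]
  nlinarith [one_sub_sq_div_two_le_cos (x := x), sq_abs x, abs_nonneg x]

noncomputable def stripBarrier (a b ε : ℝ) (q : ℝ × ℝ) : ℝ :=
  ε * cosh ((b - a)⁻¹ / 2 * q.1) * cos ((b - a)⁻¹ * (q.2 - (a + b) / 2))

theorem contDiff_stripBarrier (a b ε : ℝ) : ContDiff ℝ 2 (stripBarrier a b ε) := by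
  unfold stripBarrier
  fun_prop

theorem lap_stripBarrier (a b ε : ℝ) (p : ℝ × ℝ) :
    lap (stripBarrier a b ε) p = -(3 / 4 * (b - a)⁻¹ ^ 2) * stripBarrier a b ε p := by
  unfold stripBarrier
  rw [lap_cosh_mul_cos]
  ring

section Strip

variable {φ : ℝ × ℝ → ℝ} {a b : ℝ}

theorem stripBarrier_bounds {ε : ℝ} {q : ℝ × ℝ} (hab : a < b) (hε : 0 ≤ ε)
    (hq : q ∈ Prod.snd ⁻¹' Icc a b) :
    ε * cosh ((b - a)⁻¹ / 2 * q.1) / 2 ≤ stripBarrier a b ε q ∧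
      stripBarrier a b ε q ≤ ε * cosh ((b - a)⁻¹ / 2 * q.1) := by
  have hcosh := mul_nonneg hε (cosh_pos ((b - a)⁻¹ / 2 * q.1)).le
  have hcos := half_le_cos_inv_mul_sub_midpoint hab hq
  have hcos' := cos_le_one ((b - a)⁻¹ * (q.2 - (a + b) / 2))
  unfold stripBarrier
  constructor <;> nlinarith

theorem le_stripBarrier_of_mem_rectangle_diff {B ε R : ℝ} (hab : a < b) (hε : 0 < ε)
    (hbot : ∀ x, φ (x, a) ≤ 0) (htop : ∀ x, φ (x, b) ≤ 0)
    (hB : ∀ p ∈ Prod.snd ⁻¹' Icc a b, φ p ≤ B) (hR₀ : 0 ≤ R)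
    (hR : 2 * B ≤ ε * cosh ((b - a)⁻¹ / 2 * R)) :
    ∀ q ∈ Icc (-R) R ×ˢ Icc a b \ Ioo (-R) R ×ˢ Ioo a b, φ q ≤ stripBarrier a b ε q := by
  rintro ⟨x, y⟩ ⟨⟨-, hy⟩, hq⟩
  have hw := stripBarrier_bounds hab hε.le (q := (x, y)) hy
  have hcosh := mul_pos hε (cosh_pos ((b - a)⁻¹ / 2 * x))
  by_cases hy' : y ∈ Ioo a b
  · have hxR : R ≤ |x| := by
      by_contra! h
      exact hq ⟨abs_lt.1 h, hy'⟩
    have hcoshR : cosh ((b - a)⁻¹ / 2 * R) ≤ cosh ((b - a)⁻¹ / 2 * x) := by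
      rw [cosh_le_cosh, abs_mul, abs_mul, abs_of_nonneg hR₀]
      gcongr
    nlinarith [hB (x, y) hy, mul_le_mul_of_nonneg_left hcoshR hε.le]
  · obtain rfl | rfl : y = a ∨ y = b := by
      simp only [mem_Ioo, not_and_or, not_lt] at hy'
      exact hy'.imp (le_antisymm · hy.1) (hy.2.antisymm ·)
    · linarith [hbot x]
    · linarith [htop x]

theorem le_mul_cosh_of_subharmonic_on_strip {B ε : ℝ} (hab : a < b) (hε : 0 < ε)
    (hcont : ContinuousOn φ (Prod.snd ⁻¹' Icc a b))
    (hC2 : ContDiffOn ℝ 2 φ (Prod.snd ⁻¹' Ioo a b))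
    (hsub : ∀ p ∈ Prod.snd ⁻¹' Ioo a b, 0 ≤ lap φ p)
    (hbot : ∀ x, φ (x, a) ≤ 0) (htop : ∀ x, φ (x, b) ≤ 0)
    (hB : ∀ p ∈ Prod.snd ⁻¹' Icc a b, φ p ≤ B) {p : ℝ × ℝ} (hp : p ∈ Prod.snd ⁻¹' Icc a b) :
    φ p ≤ ε * cosh ((b - a)⁻¹ / 2 * p.1) := by
  have hl : 0 < (b - a)⁻¹ := inv_pos.2 (sub_pos.2 hab)
  obtain ⟨R, hpR, hR⟩ : ∃ R, |p.1| ≤ R ∧ 2 * B ≤ ε * cosh ((b - a)⁻¹ / 2 * R) :=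
    ((eventually_ge_atTop |p.1|).and
      (((tendsto_cosh_atTop.comp (tendsto_id.const_mul_atTop (half_pos hl))).const_mul_atTop
        hε).eventually_ge_atTop (2 * B))).exists
  set w := stripBarrier a b ε
  have hint : interior (Icc (-R) R ×ˢ Icc a b) = Ioo (-R) R ×ˢ Ioo a b := by
    rw [interior_prod_eq, interior_Icc, interior_Icc]
  have hφ : ∀ q ∈ interior (Icc (-R) R ×ˢ Icc a b), ContDiffAt ℝ 2 φ q := fun q hq =>
    hC2.contDiffAt ((isOpen_Ioo.preimage continuous_snd).mem_nhds (hint ▸ hq).2)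
  have hlap : ∀ q ∈ interior (Icc (-R) R ×ˢ Icc a b), 0 < lap (fun q => φ q - w q) q := by
    intro q hq
    have hy : q.2 ∈ Ioo a b := (hint ▸ hq).2
    have hwq : 0 < w q := (by positivity : 0 < ε * cosh ((b - a)⁻¹ / 2 * q.1) / 2).trans_le
      (stripBarrier_bounds hab hε.le (Ioo_subset_Icc_self hy)).1
    rw [lap_sub (hφ q hq) (contDiff_stripBarrier a b ε).contDiffAt, lap_stripBarrier]
    nlinarith [hsub q hy, mul_pos (pow_pos hl 2) hwq]
  have key := (isCompact_Icc.prod isCompact_Icc).le_of_le_off_interior_of_lap_pos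
    (f := fun q => φ q - w q)
    ((hcont.mono fun q hq => hq.2).sub (contDiff_stripBarrier a b ε).continuous.continuousOn)
    (fun q hq => (hφ q hq).sub (contDiff_stripBarrier a b ε).contDiffAt) hlap
    (fun q hq => sub_nonpos.2 (le_stripBarrier_of_mem_rectangle_diff hab hε hbot htop hB
      ((abs_nonneg _).trans hpR) hR q (hint ▸ hq)))
    p ⟨abs_le.1 hpR, hp⟩
  linarith [(stripBarrier_bounds hab hε.le hp).2]

theorem nonpos_of_subharmonic_on_strip (hab : a < b)
    (hcont : ContinuousOn φ (Prod.snd ⁻¹' Icc a b))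
    (hC2 : ContDiffOn ℝ 2 φ (Prod.snd ⁻¹' Ioo a b))
    (hsub : ∀ p ∈ Prod.snd ⁻¹' Ioo a b, 0 ≤ lap φ p)
    (hbot : ∀ x, φ (x, a) ≤ 0) (htop : ∀ x, φ (x, b) ≤ 0)
    (hbdd : BddAbove (φ '' (Prod.snd ⁻¹' Icc a b))) :
    ∀ p ∈ Prod.snd ⁻¹' Icc a b, φ p ≤ 0 := by
  obtain ⟨B, hB⟩ := hbdd
  intro p hp
  have hc := cosh_pos ((b - a)⁻¹ / 2 * p.1)
  refine le_of_forall_pos_le_add fun δ hδ => ?_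
  have := le_mul_cosh_of_subharmonic_on_strip (ε := δ / cosh ((b - a)⁻¹ / 2 * p.1)) hab
    (div_pos hδ hc) hcont hC2 hsub hbot htop (fun q hq => hB (mem_image_of_mem φ hq)) hp
  rwa [div_mul_cancel₀ _ hc.ne', ← zero_add δ] at this

theorem le_on_strip_of_subharmonic_of_superharmonic {u v : ℝ × ℝ → ℝ} (hab : a < b)
    (hu : ContinuousOn u (Prod.snd ⁻¹' Icc a b)) (hv : ContinuousOn v (Prod.snd ⁻¹' Icc a b))
    (hu₂ : ContDiffOn ℝ 2 u (Prod.snd ⁻¹' Ioo a b)) (hv₂ : ContDiffOn ℝ 2 v (Prod.snd ⁻¹' Ioo a b))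
    (hlu : ∀ p ∈ Prod.snd ⁻¹' Ioo a b, 0 ≤ lap u p)
    (hlv : ∀ p ∈ Prod.snd ⁻¹' Ioo a b, lap v p ≤ 0)
    (hbot : ∀ x, u (x, a) ≤ v (x, a)) (htop : ∀ x, u (x, b) ≤ v (x, b))
    (hub : BddAbove (u '' (Prod.snd ⁻¹' Icc a b))) (hvb : BddBelow (v '' (Prod.snd ⁻¹' Icc a b))) :
    ∀ p ∈ Prod.snd ⁻¹' Icc a b, u p ≤ v p := by
  have hopen : IsOpen (Prod.snd ⁻¹' Ioo a b : Set (ℝ × ℝ)) := isOpen_Ioo.preimage continuous_snd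
  obtain ⟨Bu, hBu⟩ := hub
  obtain ⟨bv, hbv⟩ := hvb
  have hle := nonpos_of_subharmonic_on_strip (φ := fun p => u p - v p) hab (hu.sub hv)
    (hu₂.sub hv₂)
    (fun p hp => by
      rw [lap_sub (hu₂.contDiffAt (hopen.mem_nhds hp)) (hv₂.contDiffAt (hopen.mem_nhds hp))]
      linarith [hlu p hp, hlv p hp])
    (fun x => sub_nonpos.2 (hbot x)) (fun x => sub_nonpos.2 (htop x))
    ⟨Bu - bv, by
      rintro _ ⟨p, hp, rfl⟩
      linarith [hBu (mem_image_of_mem u hp), hbv (mem_image_of_mem v hp)]⟩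
  exact fun p hp => sub_nonpos.1 (hle p hp)

theorem eqOn_strip_of_harmonic {u v : ℝ × ℝ → ℝ} (hab : a < b)
    (hu : ContinuousOn u (Prod.snd ⁻¹' Icc a b)) (hv : ContinuousOn v (Prod.snd ⁻¹' Icc a b))
    (hu₂ : ContDiffOn ℝ 2 u (Prod.snd ⁻¹' Ioo a b)) (hv₂ : ContDiffOn ℝ 2 v (Prod.snd ⁻¹' Ioo a b))
    (hlu : ∀ p ∈ Prod.snd ⁻¹' Ioo a b, lap u p = 0)
    (hlv : ∀ p ∈ Prod.snd ⁻¹' Ioo a b, lap v p = 0)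
    (hbot : ∀ x, u (x, a) = v (x, a)) (htop : ∀ x, u (x, b) = v (x, b))
    (hub : Bornology.IsBounded (u '' (Prod.snd ⁻¹' Icc a b)))
    (hvb : Bornology.IsBounded (v '' (Prod.snd ⁻¹' Icc a b))) :
    EqOn u v (Prod.snd ⁻¹' Icc a b) := fun p hp =>
  le_antisymm
    (le_on_strip_of_subharmonic_of_superharmonic hab hu hv hu₂ hv₂ (fun q hq => (hlu q hq).ge)
      (fun q hq => (hlv q hq).le) (fun x => (hbot x).le) (fun x => (htop x).le) hub.bddAbove
      hvb.bddBelow p hp)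
    (le_on_strip_of_subharmonic_of_superharmonic hab hv hu hv₂ hu₂ (fun q hq => (hlv q hq).ge)
      (fun q hq => (hlu q hq).le) (fun x => (hbot x).ge) (fun x => (htop x).ge) hvb.bddAbove
      hub.bddBelow p hp)

end Strip

/-- A function continuous on the closed strip `ℝ × [H₁,H₂]`, harmonic
in the open strip, with boundary values `0` on `y = H₁` and `Q` on `y = H₂`, and bounded
between `0` and `Q`, must be the linear profile `Q(y−H₁)/(H₂−H₁)`. -/
theorem strip_dirichlet_uniqueness
    (H₁ H₂ Q : ℝ) (ψ : ℝ × ℝ → ℝ) (hH : H₁ < H₂)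
    (hcont : ContinuousOn ψ {p : ℝ × ℝ | H₁ ≤ p.2 ∧ p.2 ≤ H₂})
    (hC2 : ContDiffOn ℝ 2 ψ {p : ℝ × ℝ | H₁ < p.2 ∧ p.2 < H₂})
    (hharm : ∀ p ∈ {p : ℝ × ℝ | H₁ < p.2 ∧ p.2 < H₂}, lap ψ p = 0)
    (hbot : ∀ x : ℝ, ψ (x, H₁) = 0)
    (htop : ∀ x : ℝ, ψ (x, H₂) = Q)
    (hbound : ∀ p ∈ {p : ℝ × ℝ | H₁ ≤ p.2 ∧ p.2 ≤ H₂}, 0 ≤ ψ p ∧ ψ p ≤ Q) :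
    ∀ p ∈ {p : ℝ × ℝ | H₁ ≤ p.2 ∧ p.2 ≤ H₂},
      ψ p = Q * (p.2 - H₁) / (H₂ - H₁) := by
  set ℓ : ℝ → ℝ := fun t => Q * (t - H₁) / (H₂ - H₁)
  have hd : 0 < H₂ - H₁ := sub_pos.2 hH
  have hQ : 0 ≤ Q := htop 0 ▸ (hbound (0, H₂) ⟨hH.le, le_rfl⟩).1
  have hℓ : ∀ t, HasDerivAt ℓ (Q * 1 / (H₂ - H₁)) t := fun t =>
    (((hasDerivAt_id t).sub_const H₁).const_mul Q).div_const _
  have hℓC : ContDiff ℝ 2 fun q : ℝ × ℝ => ℓ q.2 := by fun_prop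
  have hℓI : ∀ t ∈ Icc H₁ H₂, ℓ t ∈ Icc 0 Q := fun t ht =>
    ⟨div_nonneg (mul_nonneg hQ (sub_nonneg.2 ht.1)) hd.le,
      (div_le_iff₀ hd).2 (mul_le_mul_of_nonneg_left (by linarith [ht.2]) hQ)⟩
  exact eqOn_strip_of_harmonic hH hcont hℓC.continuous.continuousOn hC2 hℓC.contDiffOn hharm
    (fun q _ => lap_comp_snd hℓ (fun t => hasDerivAt_const t _) q)
    (fun x => by simp [hbot]) (fun x => by simp [htop, hd.ne'])
    ((Metric.isBounded_Icc 0 Q).subset (image_subset_iff.2 hbound))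
    ((Metric.isBounded_Icc 0 Q).subset (image_subset_iff.2 fun q hq => hℓI q.2 hq))
end
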